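/- arXiv:2503.05468 — 5 statements merged into one kernel-verified Lean document; each statement's English description precedes it below -/
import Mathlib

section
/- Let μ be a p×p matrix of locally finite measures on [0,∞) satisfying (A1) and (A2). Then there exists at most one real number α with ρ(Lμ(α)) = 1, where ρ denotes the spectral radius. -/
open MeasureTheory Filter Topology

noncomputable section

/-- The spectral radius of a complex `p × p` matrix: the supremum of the absolute values
of its eigenvalues. -/
def specRad (p : ℕ) (A : Matrix (Fin p) (Fin p) ℂ) : ℝ :=
  sSup ((fun z => ‖z‖) '' spectrum ℂ A)

/-- The matrix of atoms at `0`, `μ(0) = (μ^{i,j}({0}))_{i,j}`, viewed as a complex matrix. -/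
def atomMat {p : ℕ} (μ : Fin p → Fin p → Measure ℝ) : Matrix (Fin p) (Fin p) ℂ :=
  Matrix.of fun i j => ((μ i j {0}).toReal : ℂ)

/-- The Laplace transform `Lμ(z)` of a matrix of measures. -/
def lapT {p : ℕ} (μ : Fin p → Fin p → Measure ℝ) (z : ℂ) : Matrix (Fin p) (Fin p) ℂ :=
  Matrix.of fun i j => ∫ x, Complex.exp (-z * x) ∂(μ i j)

/-- The domain `D(Lμ)` of the Laplace transform. -/
def LTdom {p : ℕ} (μ : Fin p → Fin p → Measure ℝ) : Set ℂ :=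
  {z | ∀ i j, Integrable (fun x => Real.exp (-z.re * x)) (μ i j)}

/-- Matrix convolution of two matrices of measures:
`(μ*ν)^{i,j} = Σ_k μ^{i,k} * ν^{k,j}`. -/
def mconv {p : ℕ} (μ ν : Fin p → Fin p → Measure ℝ) : Fin p → Fin p → Measure ℝ :=
  fun i j => ∑ k, (μ i k).conv (ν k j)

/-- Matrix convolution powers: `μ^{*0} = I_p δ_0`, `μ^{*(n+1)} = μ * μ^{*n}`. -/
def mconvPow {p : ℕ} (μ : Fin p → Fin p → Measure ℝ) : ℕ → Fin p → Fin p → Measure ℝ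
  | 0 => fun i j => if i = j then Measure.dirac 0 else 0
  | n + 1 => mconv μ (mconvPow μ n)

/-- The Markov renewal measure `U = Σ_{n ≥ 0} μ^{*n}`. -/
def renewal {p : ℕ} (μ : Fin p → Fin p → Measure ℝ) : Fin p → Fin p → Measure ℝ :=
  fun i j => Measure.sum fun n => mconvPow μ n i j

/-- `Λ = {z ∈ D(Lμ) : det(I_p - Lμ(z)) = 0}`. -/
def LambdaSet {p : ℕ} (μ : Fin p → Fin p → Measure ℝ) : Set ℂ :=
  {z ∈ LTdom μ | Matrix.det (1 - lapT μ z) = 0}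

/-! For real `t` in the domain, `Lμ(t)` is an entrywise nonnegative matrix whose entries are
log-convex in `t` by Hölder's inequality. Entrywise log-convexity survives matrix products and
sums, hence passes to the row-sum norms of the powers `Lμ(t)^n` and, by Gelfand's formula, to
`t ↦ ρ(Lμ(t))`. As `t → ∞`, dominated convergence gives `Lμ(t) → μ(0)`, and the spectral radius
is upper semicontinuous, so `ρ(Lμ(t)) < 1` for large `t` by (A2). If `ρ(Lμ(α)) = ρ(Lμ(β)) = 1`
with `α < β`, log-convexity on `[α, t]` forces `ρ(Lμ(t)) ≥ 1` for every `t > β`. -/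

open scoped ENNReal NNReal

attribute [local instance] Matrix.linftyOpNormedRing Matrix.linftyOpNormedAlgebra

section SpectralRadius

variable {p : ℕ}

theorem specRad_nonneg (A : Matrix (Fin p) (Fin p) ℂ) : 0 ≤ specRad p A :=
  Real.sSup_nonneg (by rintro _ ⟨z, -, rfl⟩; positivity)

theorem ofReal_specRad (A : Matrix (Fin p) (Fin p) ℂ) :
    ENNReal.ofReal (specRad p A) = spectralRadius ℂ A := by
  rcases (spectrum ℂ A).eq_empty_or_nonempty with h | h
  · simp [specRad, spectralRadius, h]
  obtain ⟨z, hz, hρ⟩ := spectrum.exists_nnnorm_eq_spectralRadius_of_nonempty h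
  have hmax : IsGreatest ((fun z => ‖z‖) '' spectrum ℂ A) ‖z‖ := by
    refine ⟨⟨z, hz, rfl⟩, ?_⟩
    rintro _ ⟨w, hw, rfl⟩
    have : (‖w‖₊ : ℝ≥0∞) ≤ ‖z‖₊ := hρ ▸ le_iSup₂ (f := fun k _ => (‖k‖₊ : ℝ≥0∞)) w hw
    exact_mod_cast this
  rw [specRad, hmax.csSup_eq, ← hρ, ofReal_norm]
  rfl

theorem tendsto_norm_pow_rpow_specRad (A : Matrix (Fin p) (Fin p) ℂ) :
    Tendsto (fun n : ℕ => ‖A ^ n‖ ^ (1 / n : ℝ)) atTop (𝓝 (specRad p A)) := by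
  have h := (ENNReal.tendsto_toReal ENNReal.ofReal_ne_top).comp
    ((ofReal_specRad A).symm ▸ spectrum.pow_norm_pow_one_div_tendsto_nhds_spectralRadius A)
  rw [ENNReal.toReal_ofReal (specRad_nonneg A)] at h
  refine h.congr fun n => ?_
  simp only [Function.comp_apply]
  exact ENNReal.toReal_ofReal (by positivity)

theorem upperSemicontinuous_specRad : UpperSemicontinuous (specRad p) := by
  intro A r hAr
  obtain ⟨r', hAr', hr'r⟩ := exists_between hAr
  have hbdd : BddAbove ((fun z => ‖z‖) '' spectrum ℂ A) :=
    ⟨‖A‖ * ‖(1 : Matrix (Fin p) (Fin p) ℂ)‖, by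
      rintro _ ⟨z, hz, rfl⟩; exact spectrum.norm_le_norm_mul_of_mem hz⟩
  have hball : spectrum ℂ A ⊆ Metric.ball 0 r' := fun z hz => by
    simpa using (le_csSup hbdd ⟨z, hz, rfl⟩).trans_lt hAr'
  have hnhds : Metric.closedBall (0 : ℂ) r' ∈ 𝓝ˢ (spectrum ℂ A) :=
    mem_nhdsSet_iff_forall.2 fun z hz =>
      Metric.closedBall_mem_nhds_of_mem (hball hz)
  filter_upwards [upperHemicontinuousAt_iff.1 (upperHemicontinuous_spectrum ℂ _ A) _ hnhds]
    with B hB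
  refine (Real.sSup_le ?_ ((specRad_nonneg A).trans hAr'.le)).trans_lt hr'r
  rintro _ ⟨z, hz, rfl⟩
  simpa using subset_of_mem_nhdsSet hB hz

end SpectralRadius

theorem NNReal.sum_rpow_mul_rpow_le {ι : Type*} (s : Finset ι) (a b : ι → ℝ≥0) {l : ℝ}
    (hl0 : 0 < l) (hl1 : l < 1) :
    ∑ k ∈ s, a k ^ l * b k ^ (1 - l) ≤ (∑ k ∈ s, a k) ^ l * (∑ k ∈ s, b k) ^ (1 - l) := by
  have hpq : (1 / l).HolderConjugate (1 / (1 - l)) :=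
    Real.holderConjugate_iff.2 ⟨by rw [lt_one_div one_pos hl0]; simpa, by simp⟩
  simpa [← NNReal.rpow_mul, hl0.ne', (sub_pos.2 hl1).ne'] using
    NNReal.inner_le_Lp_mul_Lq s (fun k => a k ^ l) (fun k => b k ^ (1 - l)) hpq

namespace Matrix

variable {n : Type*} [Fintype n] {l : ℝ} {A B C : Matrix n n ℝ≥0}

theorem mul_apply_le_rpow_mul_rpow {A' B' C' : Matrix n n ℝ≥0} (hl0 : 0 < l) (hl1 : l < 1)
    (h : ∀ i j, C i j ≤ A i j ^ l * B i j ^ (1 - l))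
    (h' : ∀ i j, C' i j ≤ A' i j ^ l * B' i j ^ (1 - l)) (i j : n) :
    (C * C') i j ≤ (A * A') i j ^ l * (B * B') i j ^ (1 - l) := by
  simp only [mul_apply]
  refine (Finset.sum_le_sum fun k _ => mul_le_mul' (h i k) (h' k j)).trans ?_
  refine le_of_eq_of_le (Finset.sum_congr rfl fun k _ => ?_)
    (NNReal.sum_rpow_mul_rpow_le _ _ _ hl0 hl1)
  rw [NNReal.mul_rpow, NNReal.mul_rpow]
  ring

variable [DecidableEq n]

theorem pow_apply_le_rpow_mul_rpow (hl0 : 0 < l) (hl1 : l < 1)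
    (h : ∀ i j, C i j ≤ A i j ^ l * B i j ^ (1 - l)) (m : ℕ) (i j : n) :
    (C ^ m) i j ≤ (A ^ m) i j ^ l * (B ^ m) i j ^ (1 - l) := by
  induction m generalizing i j with
  | zero =>
    rcases eq_or_ne i j with rfl | hij
    · simp
    · simp [one_apply_ne hij]
  | succ m ih =>
    simp only [pow_succ]
    exact mul_apply_le_rpow_mul_rpow hl0 hl1 ih h i j

theorem nnnorm_mapMatrix_le_rpow_mul_rpow (hl0 : 0 < l) (hl1 : l < 1)
    (h : ∀ i j, C i j ≤ A i j ^ l * B i j ^ (1 - l)) :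
    ‖(algebraMap ℝ≥0 ℂ).mapMatrix C‖₊ ≤
      ‖(algebraMap ℝ≥0 ℂ).mapMatrix A‖₊ ^ l * ‖(algebraMap ℝ≥0 ℂ).mapMatrix B‖₊ ^ (1 - l) := by
  simp only [linfty_opNNNorm_def, RingHom.mapMatrix_apply, map_apply, nnnorm_algebraMap_nnreal]
  refine Finset.sup_le fun i _ => (Finset.sum_le_sum fun j _ => h i j).trans <|
    (NNReal.sum_rpow_mul_rpow_le _ _ _ hl0 hl1).trans <| mul_le_mul' ?_ ?_
  · exact NNReal.rpow_le_rpow (Finset.le_sup (f := fun i => ∑ j, A i j) (Finset.mem_univ i)) hl0.le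
  · exact NNReal.rpow_le_rpow (Finset.le_sup (f := fun i => ∑ j, B i j) (Finset.mem_univ i))
      (sub_nonneg.2 hl1.le)

theorem specRad_mapMatrix_le_rpow_mul_rpow {p : ℕ} {A B C : Matrix (Fin p) (Fin p) ℝ≥0}
    (hl0 : 0 < l) (hl1 : l < 1) (h : ∀ i j, C i j ≤ A i j ^ l * B i j ^ (1 - l)) :
    specRad p ((algebraMap ℝ≥0 ℂ).mapMatrix C) ≤
      specRad p ((algebraMap ℝ≥0 ℂ).mapMatrix A) ^ l *
        specRad p ((algebraMap ℝ≥0 ℂ).mapMatrix B) ^ (1 - l) := by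
  refine le_of_tendsto_of_tendsto' (tendsto_norm_pow_rpow_specRad _)
    (((tendsto_norm_pow_rpow_specRad _).rpow_const (Or.inr hl0.le)).mul
      ((tendsto_norm_pow_rpow_specRad _).rpow_const (Or.inr (sub_nonneg.2 hl1.le)))) fun m => ?_
  have hm := nnnorm_mapMatrix_le_rpow_mul_rpow hl0 hl1 (pow_apply_le_rpow_mul_rpow hl0 hl1 h m)
  simp only [← map_pow] at hm ⊢
  rw [← Real.rpow_mul (norm_nonneg _), ← Real.rpow_mul (norm_nonneg _), mul_comm _ l,
    mul_comm _ (1 - l), Real.rpow_mul (norm_nonneg _), Real.rpow_mul (norm_nonneg _),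
    ← Real.mul_rpow (by positivity) (by positivity)]
  exact Real.rpow_le_rpow (norm_nonneg _) (by exact_mod_cast hm) (by positivity)

end Matrix

section LaplaceTransform

variable {p : ℕ} {μ : Fin p → Fin p → Measure ℝ}

def lapTNNReal (μ : Fin p → Fin p → Measure ℝ) (t : ℝ) : Matrix (Fin p) (Fin p) ℝ≥0 :=
  Matrix.of fun i j => (∫⁻ x, ENNReal.ofReal (Real.exp (-t * x)) ∂(μ i j)).toNNReal

theorem lapT_ofReal (t : ℝ) : lapT μ t = (algebraMap ℝ≥0 ℂ).mapMatrix (lapTNNReal μ t) := by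
  ext i j
  have hexp : ∀ x : ℝ, Complex.exp (-(t : ℂ) * x) = ((Real.exp (-t * x) : ℝ) : ℂ) := by
    intro x; push_cast; rfl
  rw [lapT, Matrix.of_apply, RingHom.mapMatrix_apply, Matrix.map_apply, lapTNNReal,
    Matrix.of_apply, funext hexp, integral_complex_ofReal, integral_eq_lintegral_of_nonneg_ae
      (.of_forall fun x => (Real.exp_pos _).le) (by fun_prop : Continuous _).aestronglyMeasurable]
  rfl

theorem lintegral_exp_lt_top {t : ℝ} (ht : (t : ℂ) ∈ LTdom μ) (i j : Fin p) :
    ∫⁻ x, ENNReal.ofReal (Real.exp (-t * x)) ∂(μ i j) < ⊤ := by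
  simpa using (ht i j).lintegral_lt_top

theorem lapTNNReal_apply_le_rpow_mul_rpow {a b l : ℝ} (hl0 : 0 ≤ l) (hl1 : l ≤ 1)
    (ha : (a : ℂ) ∈ LTdom μ) (hb : (b : ℂ) ∈ LTdom μ) (i j : Fin p) :
    lapTNNReal μ (l * a + (1 - l) * b) i j ≤
      lapTNNReal μ a i j ^ l * lapTNNReal μ b i j ^ (1 - l) := by
  have hexp : ∀ x : ℝ, ENNReal.ofReal (Real.exp (-(l * a + (1 - l) * b) * x)) =
      ENNReal.ofReal (Real.exp (-a * x)) ^ l * ENNReal.ofReal (Real.exp (-b * x)) ^ (1 - l) := by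
    intro x
    rw [ENNReal.ofReal_rpow_of_pos (Real.exp_pos _), ENNReal.ofReal_rpow_of_pos (Real.exp_pos _),
      ← ENNReal.ofReal_mul (by positivity), ← Real.exp_mul, ← Real.exp_mul, ← Real.exp_add]
    ring_nf
  have hholder := ENNReal.lintegral_mul_norm_pow_le (μ := μ i j)
    (by fun_prop : Measurable fun x => ENNReal.ofReal (Real.exp (-a * x))).aemeasurable
    (by fun_prop : Measurable fun x => ENNReal.ofReal (Real.exp (-b * x))).aemeasurable
    hl0 (sub_nonneg.2 hl1) (add_sub_cancel l 1)
  simp only [lapTNNReal, Matrix.of_apply, funext hexp]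
  rw [← ENNReal.toNNReal_rpow, ← ENNReal.toNNReal_rpow, ← ENNReal.toNNReal_mul]
  exact ENNReal.toNNReal_mono (ENNReal.mul_ne_top
    (ENNReal.rpow_ne_top_of_nonneg hl0 (lintegral_exp_lt_top ha i j).ne)
    (ENNReal.rpow_ne_top_of_nonneg (sub_nonneg.2 hl1) (lintegral_exp_lt_top hb i j).ne)) hholder

theorem specRad_lapT_le_rpow_mul_rpow {a b l : ℝ} (hl0 : 0 < l) (hl1 : l < 1)
    (ha : (a : ℂ) ∈ LTdom μ) (hb : (b : ℂ) ∈ LTdom μ) :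
    specRad p (lapT μ ↑(l * a + (1 - l) * b)) ≤
      specRad p (lapT μ a) ^ l * specRad p (lapT μ b) ^ (1 - l) := by
  simp only [lapT_ofReal]
  exact Matrix.specRad_mapMatrix_le_rpow_mul_rpow hl0 hl1
    (lapTNNReal_apply_le_rpow_mul_rpow hl0.le hl1.le ha hb)

theorem ae_nonneg_of_measure_Iio_eq_zero {ν : Measure ℝ} (h : ν (Set.Iio 0) = 0) :
    ∀ᵐ x ∂ν, 0 ≤ x := by
  simpa using measure_eq_zero_iff_ae_notMem.1 h

theorem ofReal_mem_LTdom_of_le (hsupp : ∀ i j, μ i j (Set.Iio 0) = 0) {a b : ℝ}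
    (ha : (a : ℂ) ∈ LTdom μ) (hab : a ≤ b) : (b : ℂ) ∈ LTdom μ := by
  intro i j
  refine (ha i j).mono' (by fun_prop : Continuous _).aestronglyMeasurable ?_
  filter_upwards [ae_nonneg_of_measure_Iio_eq_zero (hsupp i j)] with x hx
  simpa using Real.exp_le_exp.2 (by nlinarith)

theorem tendsto_lapT_atTop (hsupp : ∀ i j, μ i j (Set.Iio 0) = 0) {β : ℝ}
    (hβ : (β : ℂ) ∈ LTdom μ) :
    Tendsto (fun t : ℝ => lapT μ t) atTop (𝓝 (atomMat μ)) := by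
  refine tendsto_pi_nhds.2 fun i => tendsto_pi_nhds.2 fun j => ?_
  have hatom : atomMat μ i j = ∫ x, Set.indicator {0} (fun _ => (1 : ℂ)) x ∂(μ i j) := by
    rw [integral_indicator_const _ (measurableSet_singleton 0), measureReal_def]
    simp [atomMat]
  rw [hatom]
  refine tendsto_integral_filter_of_dominated_convergence (fun x => Real.exp (-β * x))
    (.of_forall fun t => (by fun_prop : Continuous _).aestronglyMeasurable) ?_ (hβ i j) ?_
  · filter_upwards [eventually_ge_atTop β] with t ht
    filter_upwards [ae_nonneg_of_measure_Iio_eq_zero (hsupp i j)] with x hx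
    simpa [Complex.norm_exp] using Real.exp_le_exp.2 (by nlinarith)
  · filter_upwards [ae_nonneg_of_measure_Iio_eq_zero (hsupp i j)] with x hx
    rcases hx.eq_or_lt with rfl | hx
    · simp
    · rw [Set.indicator_of_notMem (s := {0}) (by simpa using hx.ne')]
      refine tendsto_zero_iff_norm_tendsto_zero.2 ?_
      refine (Real.tendsto_exp_neg_atTop_nhds_zero.comp
        (tendsto_id.atTop_mul_const hx)).congr fun t => ?_
      simp [Complex.norm_exp]

end LaplaceTransform

theorem malthusian_parameter_unique_general {p : ℕ} (μ : Fin p → Fin p → Measure ℝ)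
    (hsupp : ∀ i j, μ i j (Set.Iio 0) = 0)
    (hA2 : specRad p (atomMat μ) < 1) :
    ∀ α β : ℝ, (α : ℂ) ∈ LTdom μ → specRad p (lapT μ α) = 1 →
      (β : ℂ) ∈ LTdom μ → specRad p (lapT μ β) = 1 → α = β := by
  intro α β hα hρα hβ hρβ
  by_contra hne
  wlog hαβ : α < β generalizing α β
  · exact this β α hβ hρβ hα hρα (Ne.symm hne) (lt_of_le_of_ne (not_lt.1 hαβ) (Ne.symm hne))
  obtain ⟨t, hρt, hβt⟩ := (((tendsto_lapT_atTop hsupp hβ).eventually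
    (upperSemicontinuous_specRad _ 1 hA2)).and (eventually_gt_atTop β)).exists
  set l := (t - β) / (t - α)
  have hl0 : 0 < l := div_pos (by linarith) (by linarith)
  have hl1 : l < 1 := (div_lt_one (by linarith)).2 (by linarith)
  have hβ_eq : l * α + (1 - l) * t = β := by
    have hta : t - α ≠ 0 := (sub_pos.2 (hαβ.trans hβt)).ne'
    simp only [l]
    field_simp
    ring
  have hconv := specRad_lapT_le_rpow_mul_rpow hl0 hl1 hα (ofReal_mem_LTdom_of_le hsupp hβ hβt.le)
  rw [hβ_eq, hρβ, hρα, Real.one_rpow, one_mul] at hconv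
  exact (Real.rpow_lt_one (specRad_nonneg _) hρt (by linarith)).not_ge hconv

/-- Under (A1) and (A2), there is at most one real `α` with
`ρ(Lμ(α)) = 1`. -/
theorem malthusian_parameter_unique {p : ℕ} (μ : Fin p → Fin p → Measure ℝ)
    (hloc : ∀ i j, IsLocallyFiniteMeasure (μ i j))
    (hsupp : ∀ i j, μ i j (Set.Iio 0) = 0)
    (hA1 : ∃ ϑ : ℝ, (ϑ : ℂ) ∈ interior (LTdom μ))
    (hA2 : specRad p (atomMat μ) < 1) :
    ∀ α β : ℝ, (α : ℂ) ∈ LTdom μ → specRad p (lapT μ α) = 1 →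
      (β : ℂ) ∈ LTdom μ → specRad p (lapT μ β) = 1 → α = β :=
  malthusian_parameter_unique_general μ hsupp hA2
end
end

section
/- Let μ be a p×p matrix of locally finite measures on [0,∞) satisfying (A1) and (A2). If the set Λ = {λ ∈ D(Lμ) : det(I_p − Lμ(λ)) = 0} is non-empty, then condition (A3) holds, i.e., there exists θ ∈ D(Lμ) ∩ ℝ with 1 ≤ ρ(Lμ(θ)) < ∞. -/
/-! If `det (I - Lμ(z)) = 0`, then `1` is an eigenvalue of `Lμ(z)`, so `ρ(Lμ(z)) ≥ 1`. For
`θ = Re z` the matrix `Lμ(θ)` has nonnegative entries dominating those of `Lμ(z)` in modulus,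
since `|e^{-zx}| = e^{-θx}`; domination passes to all powers, and Gelfand's formula turns it
into `ρ(Lμ(z)) ≤ ρ(Lμ(θ))`. -/

open MeasureTheory Filter Topology

noncomputable section

open scoped ENNReal

attribute [local instance] Matrix.linftyOpNormedRing Matrix.linftyOpNormedAlgebra

theorem spectrum.nnnorm_le_spectralRadius_of_mem {𝕜 A : Type*} [NormedField 𝕜] [Ring A]
    [Algebra 𝕜 A] {a : A} {k : 𝕜} (hk : k ∈ spectrum 𝕜 a) :
    (‖k‖₊ : ℝ≥0∞) ≤ spectralRadius 𝕜 a :=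
  le_iSup₂ (f := fun (k : 𝕜) (_ : k ∈ spectrum 𝕜 a) => (‖k‖₊ : ℝ≥0∞)) k hk

namespace Matrix

variable {n : Type*} [Fintype n] [DecidableEq n]

theorem norm_pow_apply_le {R : Type*} [NormedRing R] [NormOneClass R] {A : Matrix n n R}
    {C : Matrix n n ℝ} (hC : ∀ i j, 0 ≤ C i j) (hAC : ∀ i j, ‖A i j‖ ≤ C i j) (k : ℕ) :
    ∀ i j, ‖(A ^ k) i j‖ ≤ (C ^ k) i j := by
  induction k with
  | zero =>
    intro i j
    by_cases h : i = j <;> simp [h]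
  | succ k ih =>
    intro i j
    rw [pow_succ', pow_succ', mul_apply, mul_apply]
    refine (norm_sum_le _ _).trans (Finset.sum_le_sum fun l _ => ?_)
    exact (norm_mul_le _ _).trans (mul_le_mul (hAC i l) (ih l j) (norm_nonneg _) (hC i l))

theorem one_mem_spectrum_of_det_one_sub_eq_zero {R : Type*} [CommRing R] [Nontrivial R]
    {A : Matrix n n R} (h : det (1 - A) = 0) : (1 : R) ∈ spectrum R A :=
  mem_spectrum_of_isRoot_charpoly <| by
    rwa [Polynomial.IsRoot, eval_charpoly, scalar_apply, diagonal_one]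

/-- Gelfand's formula, read in the `l∞` operator norm, in which entrywise domination
`|Aᵏ| ≤ Cᵏ` becomes `‖Aᵏ‖ ≤ ‖Cᵏ‖`. -/
theorem spectralRadius_le_of_norm_apply_le {A : Matrix n n ℂ} {C : Matrix n n ℝ}
    (hC : ∀ i j, 0 ≤ C i j) (hAC : ∀ i j, ‖A i j‖ ≤ C i j) :
    spectralRadius ℂ A ≤ spectralRadius ℂ (C.map Complex.ofReal) := by
  have hpow : ∀ k : ℕ, ‖A ^ k‖₊ ≤ ‖C.map Complex.ofReal ^ k‖₊ := fun k => by
    rw [linfty_opNNNorm_def, linfty_opNNNorm_def,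
      show C.map Complex.ofReal = C.map Complex.ofRealHom from rfl, ← Matrix.map_pow]
    gcongr with i _ j _
    rw [← NNReal.coe_le_coe, coe_nnnorm, coe_nnnorm, map_apply, Complex.ofRealHom_eq_coe,
      Complex.norm_real, Real.norm_of_nonneg (pow_apply_nonneg hC k i j)]
    exact norm_pow_apply_le hC hAC k i j
  refine le_of_tendsto_of_tendsto' (spectrum.pow_nnnorm_pow_one_div_tendsto_nhds_spectralRadius A)
    (spectrum.pow_nnnorm_pow_one_div_tendsto_nhds_spectralRadius _) fun k => ?_
  gcongr
  exact_mod_cast hpow k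

end Matrix

theorem spectralRadius_eq_ofReal_specRad (p : ℕ) (A : Matrix (Fin p) (Fin p) ℂ) :
    spectralRadius ℂ A = ENNReal.ofReal (specRad p A) := by
  rcases (spectrum ℂ A).eq_empty_or_nonempty with h | h
  · simp [specRad, spectralRadius, h]
  obtain ⟨k, hk, hρ⟩ := spectrum.exists_nnnorm_eq_spectralRadius_of_nonempty h
  suffices specRad p A = ‖k‖ by rw [← hρ, this, ← coe_nnnorm, ENNReal.ofReal_coe_nnreal]
  refine IsGreatest.csSup_eq ⟨⟨k, hk, rfl⟩, ?_⟩
  rintro _ ⟨l, hl, rfl⟩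
  have := hρ ▸ spectrum.nnnorm_le_spectralRadius_of_mem hl
  exact_mod_cast this

section Laplace

variable {p : ℕ} (μ : Fin p → Fin p → Measure ℝ)

def realLapT (θ : ℝ) : Matrix (Fin p) (Fin p) ℝ :=
  Matrix.of fun i j => ∫ x, Real.exp (-θ * x) ∂(μ i j)

theorem realLapT_nonneg (θ : ℝ) (i j : Fin p) : 0 ≤ realLapT μ θ i j :=
  integral_nonneg fun _ => (Real.exp_pos _).le

theorem lapT_ofReal_s5 (θ : ℝ) : lapT μ θ = (realLapT μ θ).map Complex.ofReal := by
  ext i j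
  refine (integral_congr_ae (.of_forall fun x => ?_)).trans integral_ofReal
  simp

theorem norm_lapT_apply_le (z : ℂ) (i j : Fin p) : ‖lapT μ z i j‖ ≤ realLapT μ z.re i j := by
  refine (norm_integral_le_integral_norm _).trans_eq (integral_congr_ae <| .of_forall fun x => ?_)
  simp [Complex.norm_exp, Complex.mul_re]

variable {μ} in
theorem ofReal_re_mem_LTdom {z : ℂ} (hz : z ∈ LTdom μ) : (z.re : ℂ) ∈ LTdom μ := by
  simpa [LTdom] using hz

end Laplace

theorem lambda_nonempty_implies_A3_general {p : ℕ} (μ : Fin p → Fin p → Measure ℝ)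
    (hΛ : (LambdaSet μ).Nonempty) :
    ∃ θ : ℝ, (θ : ℂ) ∈ LTdom μ ∧ 1 ≤ specRad p (lapT μ θ) := by
  obtain ⟨z, hz, hdet⟩ := hΛ
  refine ⟨z.re, ofReal_re_mem_LTdom hz, ?_⟩
  have h_one : (1 : ℝ≥0∞) ≤ spectralRadius ℂ (lapT μ z) := by
    simpa using spectrum.nnnorm_le_spectralRadius_of_mem
      (Matrix.one_mem_spectrum_of_det_one_sub_eq_zero hdet)
  have h_dom : spectralRadius ℂ (lapT μ z) ≤ spectralRadius ℂ (lapT μ z.re) := by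
    rw [lapT_ofReal_s5]
    exact Matrix.spectralRadius_le_of_norm_apply_le (realLapT_nonneg μ z.re)
      (norm_lapT_apply_le μ z)
  rw [← ENNReal.one_le_ofReal, ← spectralRadius_eq_ofReal_specRad]
  exact h_one.trans h_dom

/-- Under (A1) and (A2), if `Λ` is non-empty then (A3) holds:
there exists a real `θ ∈ D(Lμ)` with `1 ≤ ρ(Lμ(θ))`. -/
theorem lambda_nonempty_implies_A3 {p : ℕ} (μ : Fin p → Fin p → Measure ℝ)
    (hloc : ∀ i j, IsLocallyFiniteMeasure (μ i j))
    (hsupp : ∀ i j, μ i j (Set.Iio 0) = 0)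
    (hA1 : ∃ ϑ : ℝ, (ϑ : ℂ) ∈ interior (LTdom μ))
    (hA2 : specRad p (atomMat μ) < 1)
    (hΛ : (LambdaSet μ).Nonempty) :
    ∃ θ : ℝ, (θ : ℂ) ∈ LTdom μ ∧ 1 ≤ specRad p (lapT μ θ) :=
  lambda_nonempty_implies_A3_general μ hΛ
end
end

section
/- Let μ be a p×p matrix of locally finite measures on [0,∞) satisfying (A1) and (A2), and write ν_s for the singular part (with respect to Lebesgue measure) of a measure ν, applied entrywise to matrices of measures. Then the following are equivalent: (A) there exists m ∈ ℕ such that the spectral radius of L(μ^{*m})_s(ϑ) is strictly less than 1; (B) there exists m ∈ ℕ such that ‖L(μ^{*m})_s(ϑ)‖ < 1. -/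
open MeasureTheory Filter Topology

noncomputable section

attribute [local instance] Matrix.linftyOpNormedRing

/-- The Laplace transform at `θ` of the singular part (w.r.t. Lebesgue measure) of the
`m`-fold convolution power: `L(μ^{*m})_s(θ)`. -/
def lapTsing {p : ℕ} (μ : Fin p → Fin p → Measure ℝ) (m : ℕ) (θ : ℝ) :
    Matrix (Fin p) (Fin p) ℂ :=
  Matrix.of fun i j =>
    ∫ x, Complex.exp (-(θ : ℂ) * x) ∂((mconvPow μ m i j).singularPart volume)

/-!
(B) ⇒ (A) holds because the spectral radius is bounded by the operator norm. For (A) ⇒ (B),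
Gelfand's formula turns `ρ(A) < 1`, `A = L(μ^{*m})_s(ϑ)`, into `‖A^k‖ < 1` for some `k ≥ 1`.
Singular parts are submultiplicative under convolution, `(μ ∗ ν)_s ≤ μ_s ∗ ν_s`, and the Laplace
transform turns convolutions into products, so `0 ≤ L(μ^{*mk})_s(ϑ) ≤ A^k` entrywise; since the
`ℓ∞` operator norm is monotone in the absolute values of the entries,
`‖L(μ^{*mk})_s(ϑ)‖ ≤ ‖A^k‖ < 1`.
-/

open scoped ENNReal NNReal

namespace MeasureTheory.Measure

instance sFinite_finset_sum {α ι : Type*} [MeasurableSpace α] (s : Finset ι)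
    (ν : ι → Measure α) [∀ i, SFinite (ν i)] : SFinite (∑ i ∈ s, ν i) := by
  classical
  induction s using Finset.induction with
  | empty => rw [Finset.sum_empty]; infer_instance
  | insert a s ha ih => rw [Finset.sum_insert ha]; infer_instance

instance sFinite_singularPart {α : Type*} [MeasurableSpace α] (μ ν : Measure α) [SFinite μ] :
    SFinite (μ.singularPart ν) :=
  sFinite_of_absolutelyContinuous (absolutelyContinuous_of_le (singularPart_le μ ν))

theorem singularPart_finset_sum {α ι : Type*} [MeasurableSpace α] (s : Finset ι)
    (ν : ι → Measure α) [∀ i, SFinite (ν i)] (ρ : Measure α) [SigmaFinite ρ] :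
    (∑ i ∈ s, ν i).singularPart ρ = ∑ i ∈ s, (ν i).singularPart ρ := by
  classical
  induction s using Finset.induction with
  | empty => simp
  | insert a s ha ih => rw [Finset.sum_insert ha, Finset.sum_insert ha, singularPart_add, ih]

section Conv

variable {M : Type*} [AddCommMonoid M] [MeasurableSpace M] [MeasurableAdd₂ M]

theorem lintegral_conv_of_map_add_eq_mul {f : M → ℝ≥0∞} (hf : Measurable f)
    (hadd : ∀ x y, f (x + y) = f x * f y) (μ ν : Measure M) [SFinite ν] :
    ∫⁻ x, f x ∂(μ ∗ ν) = (∫⁻ x, f x ∂μ) * ∫⁻ x, f x ∂ν := by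
  simp_rw [lintegral_conv hf, hadd, lintegral_const_mul _ hf]
  exact lintegral_mul_const _ hf

theorem conv_finset_sum {ι : Type*} (μ : Measure M) [SFinite μ] (s : Finset ι)
    (ν : ι → Measure M) [∀ i, SFinite (ν i)] : μ ∗ ∑ i ∈ s, ν i = ∑ i ∈ s, μ ∗ ν i := by
  classical
  induction s using Finset.induction with
  | empty => simp [conv_zero]
  | insert a s ha ih => rw [Finset.sum_insert ha, Finset.sum_insert ha, conv_add, ih]

theorem finset_sum_conv {ι : Type*} (μ : Measure M) [SFinite μ] (s : Finset ι)
    (ν : ι → Measure M) [∀ i, SFinite (ν i)] : (∑ i ∈ s, ν i) ∗ μ = ∑ i ∈ s, ν i ∗ μ := by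
  rw [conv_comm, conv_finset_sum]
  exact Finset.sum_congr rfl fun i _ => conv_comm _ _

/-- Only the part `μ_s ∗ ν_s` of `μ ∗ ν = (μ_s + μ_a) ∗ (ν_s + ν_a)` can be singular, since
convolving with an absolutely continuous measure gives an absolutely continuous measure. -/
theorem singularPart_conv_le (μ ν : Measure M) [SFinite μ] [SFinite ν] (ρ : Measure M)
    [IsAddLeftInvariant ρ] [SigmaFinite ρ] :
    (μ ∗ ν).singularPart ρ ≤ μ.singularPart ρ ∗ ν.singularPart ρ := by
  set μa := ρ.withDensity (μ.rnDeriv ρ)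
  set νa := ρ.withDensity (ν.rnDeriv ρ)
  have hμ : μ = μ.singularPart ρ + μa := haveLebesgueDecomposition_add μ ρ
  have hν : ν = ν.singularPart ρ + νa := haveLebesgueDecomposition_add ν ρ
  have hsplit : μ ∗ ν = μ.singularPart ρ ∗ ν.singularPart ρ
      + (μ.singularPart ρ ∗ νa + μa ∗ ν) := by
    conv_lhs => rw [hμ, add_conv, hν, conv_add, ← hν, add_assoc]
  have hac : μ.singularPart ρ ∗ νa + μa ∗ ν ≪ ρ := by
    refine AbsolutelyContinuous.add_left_iff.mpr ⟨?_, ?_⟩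
    · exact conv_absolutelyContinuous (withDensity_absolutelyContinuous _ _)
    · rw [conv_comm]
      exact conv_absolutelyContinuous (withDensity_absolutelyContinuous _ _)
  rw [hsplit, singularPart_add, singularPart_eq_zero_of_ac hac, add_zero]
  exact singularPart_le _ _

end Conv

end MeasureTheory.Measure

namespace Matrix

variable {n : Type*}

theorem exists_map_ofNNRealHom_eq {m : Type*} {A : Matrix m n ℝ≥0∞} (hA : ∀ i j, A i j ≠ ∞) :
    ∃ N : Matrix m n ℝ≥0, N.map ENNReal.ofNNRealHom = A :=
  ⟨A.map ENNReal.toNNReal, by ext i j; exact ENNReal.coe_toNNReal (hA i j)⟩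

variable [Fintype n]

theorem mul_apply_mono {R : Type*} [CommSemiring R] [PartialOrder R] [CanonicallyOrderedAdd R]
    {A A' B B' : Matrix n n R} (hA : ∀ i j, A i j ≤ A' i j) (hB : ∀ i j, B i j ≤ B' i j)
    (i j : n) : (A * B) i j ≤ (A' * B') i j :=
  Finset.sum_le_sum fun k _ => mul_le_mul' (hA i k) (hB k j)

theorem apply_nat_mul_le_pow_apply [DecidableEq n] {R : Type*} [CommSemiring R] [PartialOrder R]
    [CanonicallyOrderedAdd R] (f : ℕ → Matrix n n R) (h0 : ∀ i j, f 0 i j ≤ (1 : Matrix n n R) i j)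
    (hadd : ∀ a b i j, f (a + b) i j ≤ (f a * f b) i j) (m k : ℕ) (i j : n) :
    f (m * k) i j ≤ (f m ^ k) i j := by
  induction k generalizing i j with
  | zero => exact h0 i j
  | succ k ih =>
    rw [mul_add_one, pow_succ]
    exact (hadd _ _ i j).trans (mul_apply_mono ih (fun _ _ => le_rfl) i j)

section LinftyOpNorm

attribute [local instance] Matrix.linftyOpSeminormedAddCommGroup

theorem linfty_opNorm_mono {m α β : Type*} [Fintype m] [SeminormedAddCommGroup α]
    [SeminormedAddCommGroup β] {A : Matrix m n α} {B : Matrix m n β}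
    (h : ∀ i j, ‖A i j‖ ≤ ‖B i j‖) : ‖A‖ ≤ ‖B‖ := by
  have hnn : ‖A‖₊ ≤ ‖B‖₊ := by
    rw [linfty_opNNNorm_def, linfty_opNNNorm_def]
    exact Finset.sup_mono_fun fun i _ => Finset.sum_le_sum fun j _ => h i j
  exact hnn

end LinftyOpNorm

variable [DecidableEq n]

theorem pow_apply_ne_top {A : Matrix n n ℝ≥0∞} (hA : ∀ i j, A i j ≠ ∞) (k : ℕ) (i j : n) :
    (A ^ k) i j ≠ ∞ := by
  obtain ⟨N, rfl⟩ := exists_map_ofNNRealHom_eq hA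
  rw [← Matrix.map_pow]
  exact ENNReal.coe_ne_top

theorem map_toReal_pow {A : Matrix n n ℝ≥0∞} (hA : ∀ i j, A i j ≠ ∞) (k : ℕ) :
    (A ^ k).map (fun x => (x.toReal : ℂ)) = A.map (fun x => (x.toReal : ℂ)) ^ k := by
  obtain ⟨N, rfl⟩ := exists_map_ofNNRealHom_eq hA
  rw [← Matrix.map_pow, map_map, map_map]
  exact Matrix.map_pow N (Complex.ofRealHom.comp NNReal.toRealHom) k

end Matrix

attribute [local instance] Matrix.linftyOpNormedAlgebra

theorem exists_norm_pow_lt_one_of_spectralRadius_lt_one {A : Type*} [NormedRing A]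
    [NormedAlgebra ℂ A] [CompleteSpace A] {a : A} (ha : spectralRadius ℂ a < 1) :
    ∃ k : ℕ, 0 < k ∧ ‖a ^ k‖ < 1 := by
  obtain ⟨k, hk, hlt⟩ := ((eventually_gt_atTop 0).and
    ((spectrum.pow_nnnorm_pow_one_div_tendsto_nhds_spectralRadius a).eventually_lt_const ha)).exists
  refine ⟨k, hk, ?_⟩
  rw [← ENNReal.one_rpow (1 / k : ℝ), ENNReal.rpow_lt_rpow_iff (by positivity)] at hlt
  exact_mod_cast hlt

theorem spectralRadius_le_ofReal_specRad {p : ℕ} (A : Matrix (Fin p) (Fin p) ℂ) :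
    spectralRadius ℂ A ≤ ENNReal.ofReal (specRad p A) := by
  refine iSup₂_le fun z hz => ?_
  rw [← enorm_eq_nnnorm, ← ofReal_norm]
  exact ENNReal.ofReal_le_ofReal
    (le_csSup ((Matrix.finite_spectrum A).image _).bddAbove ⟨z, hz, rfl⟩)

theorem specRad_le_norm {p : ℕ} (A : Matrix (Fin p) (Fin p) ℂ) : specRad p A ≤ ‖A‖ := by
  refine Real.sSup_le ?_ (norm_nonneg A)
  rintro _ ⟨z, hz, rfl⟩
  -- `norm_le_norm_of_mem` needs `‖1‖ = 1`, which fails for `p = 0`; then the spectrum is empty.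
  have : Nonempty (Fin p) := by
    rcases isEmpty_or_nonempty (Fin p) with h | h
    · rw [spectrum.of_subsingleton] at hz
      exact hz.elim
    · exact h
  exact spectrum.norm_le_norm_of_mem hz

section MatrixConv

variable {p : ℕ}

instance sFinite_mconv (μ ν : Fin p → Fin p → Measure ℝ) [∀ i j, SFinite (μ i j)]
    [∀ i j, SFinite (ν i j)] (i j : Fin p) : SFinite (mconv μ ν i j) := by
  unfold mconv; infer_instance

instance sFinite_mconvPow (μ : Fin p → Fin p → Measure ℝ) [∀ i j, SFinite (μ i j)] (n : ℕ)
    (i j : Fin p) : SFinite (mconvPow μ n i j) := by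
  induction n generalizing i j with
  | zero => unfold mconvPow; split <;> infer_instance
  | succ n ih => unfold mconvPow; infer_instance

theorem mconv_assoc (μ ν ρ : Fin p → Fin p → Measure ℝ) [∀ i j, SFinite (μ i j)]
    [∀ i j, SFinite (ν i j)] [∀ i j, SFinite (ρ i j)] :
    mconv (mconv μ ν) ρ = mconv μ (mconv ν ρ) := by
  funext i j
  simp only [mconv, Measure.finset_sum_conv, Measure.conv_assoc, Measure.conv_finset_sum]
  exact Finset.sum_comm

theorem mconvPow_zero_mconv (μ ν : Fin p → Fin p → Measure ℝ) [∀ i j, SFinite (ν i j)] :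
    mconv (mconvPow μ 0) ν = ν := by
  funext i j
  rw [mconv, Finset.sum_eq_single_of_mem i (Finset.mem_univ i) fun k _ hk => by
    simp [mconvPow, Ne.symm hk, Measure.zero_conv]]
  simp [mconvPow, Measure.dirac_zero_conv]

theorem mconvPow_add (μ : Fin p → Fin p → Measure ℝ) [∀ i j, SFinite (μ i j)] (a b : ℕ) :
    mconvPow μ (a + b) = mconv (mconvPow μ a) (mconvPow μ b) := by
  induction a with
  | zero => rw [zero_add, mconvPow_zero_mconv]
  | succ a ih => rw [add_right_comm, mconvPow, ih, ← mconv_assoc]; rfl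

end MatrixConv

section Laplace

variable {p : ℕ}

def singularPartMat (ν : Fin p → Fin p → Measure ℝ) : Fin p → Fin p → Measure ℝ :=
  fun i j => (ν i j).singularPart volume

instance sFinite_singularPartMat (ν : Fin p → Fin p → Measure ℝ) [∀ i j, SFinite (ν i j)]
    (i j : Fin p) : SFinite (singularPartMat ν i j) := by
  unfold singularPartMat; infer_instance

theorem singularPartMat_mconv_le (μ ν : Fin p → Fin p → Measure ℝ) [∀ i j, SFinite (μ i j)]
    [∀ i j, SFinite (ν i j)] (i j : Fin p) :
    singularPartMat (mconv μ ν) i j ≤ mconv (singularPartMat μ) (singularPartMat ν) i j := by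
  rw [singularPartMat, mconv, Measure.singularPart_finset_sum]
  exact Finset.sum_le_sum fun k _ => Measure.singularPart_conv_le _ _ _

/-- The Laplace transform at a real point, `ℝ≥0∞`-valued so that it is multiplicative under
convolution without any integrability assumption. -/
def lapTENNReal (θ : ℝ) (ν : Fin p → Fin p → Measure ℝ) : Matrix (Fin p) (Fin p) ℝ≥0∞ :=
  Matrix.of fun i j => ∫⁻ x, ENNReal.ofReal (Real.exp (-θ * x)) ∂(ν i j)

theorem lapTENNReal_mono (θ : ℝ) {μ ν : Fin p → Fin p → Measure ℝ} (h : ∀ i j, μ i j ≤ ν i j)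
    (i j : Fin p) : lapTENNReal θ μ i j ≤ lapTENNReal θ ν i j :=
  lintegral_mono' (h i j) le_rfl

theorem lapTENNReal_mconv (θ : ℝ) (μ ν : Fin p → Fin p → Measure ℝ) [∀ i j, SFinite (ν i j)] :
    lapTENNReal θ (mconv μ ν) = lapTENNReal θ μ * lapTENNReal θ ν := by
  ext i j
  simp only [lapTENNReal, mconv, Matrix.of_apply, Matrix.mul_apply, lintegral_finsetSum_measure]
  refine Finset.sum_congr rfl fun k _ =>
    Measure.lintegral_conv_of_map_add_eq_mul (by fun_prop) (fun x y => ?_) _ _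
  rw [mul_add, Real.exp_add, ENNReal.ofReal_mul (Real.exp_nonneg _)]

theorem lapTENNReal_mconvPow (θ : ℝ) (μ : Fin p → Fin p → Measure ℝ) [∀ i j, SFinite (μ i j)]
    (n : ℕ) : lapTENNReal θ (mconvPow μ n) = lapTENNReal θ μ ^ n := by
  induction n with
  | zero =>
    ext i j
    by_cases h : i = j <;> simp [lapTENNReal, mconvPow, h]
  | succ n ih => rw [mconvPow, lapTENNReal_mconv, ih, pow_succ']

theorem lapTENNReal_ne_top {θ : ℝ} {μ : Fin p → Fin p → Measure ℝ} (hθ : (θ : ℂ) ∈ LTdom μ)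
    (i j : Fin p) : lapTENNReal θ μ i j ≠ ∞ := by
  simpa [lapTENNReal] using (hθ i j).lintegral_lt_top.ne

theorem lapTsing_eq_map (μ : Fin p → Fin p → Measure ℝ) (m : ℕ) (θ : ℝ) :
    lapTsing μ m θ =
      (lapTENNReal θ (singularPartMat (mconvPow μ m))).map (fun x => (x.toReal : ℂ)) := by
  ext i j
  have hexp : ∀ x : ℝ, Complex.exp (-(θ : ℂ) * x) = ((Real.exp (-θ * x) : ℝ) : ℂ) := fun x => by
    push_cast; rfl
  simp only [lapTsing, lapTENNReal, singularPartMat, Matrix.of_apply, Matrix.map_apply, hexp,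
    integral_complex_ofReal]
  rw [integral_eq_lintegral_of_nonneg_ae (Eventually.of_forall fun x => (Real.exp_pos _).le)
    (by fun_prop)]

end Laplace

theorem norm_lapTsing_mul_le {p : ℕ} {μ : Fin p → Fin p → Measure ℝ} [∀ i j, SFinite (μ i j)]
    {θ : ℝ} (hθ : (θ : ℂ) ∈ LTdom μ) (m k : ℕ) :
    ‖lapTsing μ (m * k) θ‖ ≤ ‖lapTsing μ m θ ^ k‖ := by
  set S := fun n => lapTENNReal θ (singularPartMat (mconvPow μ n))
  have hS_le_pow : ∀ n i j, S n i j ≤ (lapTENNReal θ μ ^ n) i j := fun n i j => by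
    rw [← lapTENNReal_mconvPow]
    exact lapTENNReal_mono θ (fun i j => Measure.singularPart_le _ _) i j
  have hS_add : ∀ a b i j, S (a + b) i j ≤ (S a * S b) i j := fun a b i j => by
    simp only [S, mconvPow_add, ← lapTENNReal_mconv]
    exact lapTENNReal_mono θ (singularPartMat_mconv_le _ _) i j
  have hS_fin : ∀ i j, S m i j ≠ ∞ := fun i j =>
    ne_top_of_le_ne_top (Matrix.pow_apply_ne_top (lapTENNReal_ne_top hθ) m i j) (hS_le_pow m i j)
  have hS_mul := Matrix.apply_nat_mul_le_pow_apply S (hS_le_pow 0) hS_add m k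
  rw [lapTsing_eq_map, lapTsing_eq_map, ← Matrix.map_toReal_pow hS_fin]
  refine Matrix.linfty_opNorm_mono fun i j => ?_
  simp only [Matrix.map_apply, Complex.norm_real, Real.norm_eq_abs, ENNReal.abs_toReal]
  exact ENNReal.toReal_mono (Matrix.pow_apply_ne_top hS_fin k i j) (hS_mul i j)

theorem singular_part_specRad_iff_norm_general {p : ℕ} (μ : Fin p → Fin p → Measure ℝ)
    (hloc : ∀ i j, IsLocallyFiniteMeasure (μ i j))
    (ϑ : ℝ) (hA1 : (ϑ : ℂ) ∈ interior (LTdom μ)) :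
    (∃ m : ℕ, 0 < m ∧ specRad p (lapTsing μ m ϑ) < 1) ↔
      (∃ m : ℕ, 0 < m ∧ ‖lapTsing μ m ϑ‖ < 1) := by
  have : ∀ i j, SFinite (μ i j) := fun i j => by have := hloc i j; infer_instance
  constructor
  · rintro ⟨m, hm, hρ⟩
    obtain ⟨k, hk, hnorm⟩ := exists_norm_pow_lt_one_of_spectralRadius_lt_one
      ((spectralRadius_le_ofReal_specRad _).trans_lt (ENNReal.ofReal_lt_one.mpr hρ))
    exact ⟨m * k, Nat.mul_pos hm hk,
      (norm_lapTsing_mul_le (interior_subset hA1) m k).trans_lt hnorm⟩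
  · rintro ⟨m, hm, hnorm⟩
    exact ⟨m, hm, (specRad_le_norm _).trans_lt hnorm⟩

/-- **Lemma 2.9, (A) ⟺ (B).** Under (A1) and (A2):
`∃ m ≥ 1, ρ(L(μ^{*m})_s(ϑ)) < 1` iff `∃ m ≥ 1, ‖L(μ^{*m})_s(ϑ)‖ < 1`. -/
theorem singular_part_specRad_iff_norm {p : ℕ} (μ : Fin p → Fin p → Measure ℝ)
    (hloc : ∀ i j, IsLocallyFiniteMeasure (μ i j))
    (hsupp : ∀ i j, μ i j (Set.Iio 0) = 0)
    (ϑ : ℝ) (hA1 : (ϑ : ℂ) ∈ interior (LTdom μ))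
    (hA2 : specRad p (atomMat μ) < 1) :
    (∃ m : ℕ, 0 < m ∧ specRad p (lapTsing μ m ϑ) < 1) ↔
      (∃ m : ℕ, 0 < m ∧ ‖lapTsing μ m ϑ‖ < 1) :=
  singular_part_specRad_iff_norm_general μ hloc ϑ hA1
end
end

section
/- Let μ be a p×p matrix of locally finite measures on [0,∞) satisfying (A1) and (A2). If there exists m ∈ ℕ with limsup_{η→±∞} ‖Lμ(ϑ+iη)^m‖ < 1, then there exists η₀ ≥ 0 such that sup_{|η| ≥ η₀} ‖(I_p − Lμ(ϑ+iη))^{−1}‖ < ∞ (in particular, I_p − Lμ(ϑ+iη) is invertible for |η| ≥ η₀). -/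
/-! If `‖A ^ m‖ ≤ c < 1`, then `1 - A ^ m = (1 - A) (1 + A + ⋯ + A ^ (m - 1))` is invertible by the
Neumann series, hence so is `1 - A`, with inverse `(∑_{k<m} A ^ k) (1 - A ^ m)⁻¹` of norm at most
`(∑_{k<m} M ^ k) / (1 - c)` whenever `‖A‖ ≤ M`. On the line `Re z = ϑ` we have
`|e^{-zx}| = e^{-ϑx}`, so `‖Lμ(ϑ + iη)‖ ≤ ‖Lμ(ϑ)‖` uniformly in `η`, and the bound on the powers
for `|η|` large gives the uniform bound on the resolvent. -/

open MeasureTheory Filter Topology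

noncomputable section

attribute [local instance] Matrix.linftyOpNormedRing

open scoped Matrix.Norms.Operator

section NeumannSeries

variable {R : Type*} [NormedRing R]

theorem norm_pow_le_of_norm_one_le (h1 : ‖(1 : R)‖ ≤ 1) (a : R) : ∀ k : ℕ, ‖a ^ k‖ ≤ ‖a‖ ^ k
  | 0 => by simpa using h1
  | k + 1 => norm_pow_le' a k.succ_pos

variable [HasSummableGeomSeries R]

theorem isUnit_one_sub_of_norm_pow_lt_one {a : R} {m : ℕ} (h : ‖a ^ m‖ < 1) :
    IsUnit (1 - a) := by
  have hcomm : Commute (1 - a) (∑ i ∈ Finset.range m, a ^ i) :=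
    Commute.sum_right _ _ _ fun i _ =>
      ((Commute.one_left a).sub_left (Commute.refl a)).pow_right i
  have hunit : IsUnit ((1 - a) * ∑ i ∈ Finset.range m, a ^ i) := by
    rw [mul_neg_geom_sum]
    exact (Units.oneSub _ h).isUnit
  exact (hcomm.isUnit_mul_iff.mp hunit).1

theorem inverse_one_sub_eq_geom_sum_mul {a : R} {m : ℕ} (h : ‖a ^ m‖ < 1) :
    Ring.inverse (1 - a) = (∑ i ∈ Finset.range m, a ^ i) * Ring.inverse (1 - a ^ m) := by
  set S := ∑ i ∈ Finset.range m, a ^ i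
  have hu : IsUnit (1 - a ^ m) := (Units.oneSub _ h).isUnit
  calc Ring.inverse (1 - a)
      = Ring.inverse (1 - a) * ((1 - a) * S * Ring.inverse (1 - a ^ m)) := by
        rw [mul_neg_geom_sum, Ring.mul_inverse_cancel _ hu, mul_one]
    _ = S * Ring.inverse (1 - a ^ m) := by
        rw [← mul_assoc, ← mul_assoc,
          Ring.inverse_mul_cancel _ (isUnit_one_sub_of_norm_pow_lt_one h), one_mul]

theorem norm_inverse_one_sub_le (h1 : ‖(1 : R)‖ ≤ 1) {b : R} (h : ‖b‖ < 1) :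
    ‖Ring.inverse (1 - b)‖ ≤ (1 - ‖b‖)⁻¹ := by
  rw [← geom_series_eq_inverse b h]
  linarith [tsum_geometric_le_of_norm_lt_one b h]

theorem norm_inverse_one_sub_le_of_norm_pow_le (h1 : ‖(1 : R)‖ ≤ 1) {a : R} {m : ℕ} {M c : ℝ}
    (ha : ‖a‖ ≤ M) (ham : ‖a ^ m‖ ≤ c) (hc : c < 1) :
    ‖Ring.inverse (1 - a)‖ ≤ (∑ k ∈ Finset.range m, M ^ k) * (1 - c)⁻¹ := by
  have ham' : ‖a ^ m‖ < 1 := ham.trans_lt hc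
  have hsum : ‖∑ i ∈ Finset.range m, a ^ i‖ ≤ ∑ k ∈ Finset.range m, M ^ k :=
    (norm_sum_le _ _).trans <| Finset.sum_le_sum fun k _ =>
      (norm_pow_le_of_norm_one_le h1 a k).trans (pow_le_pow_left₀ (norm_nonneg a) ha k)
  have hinv : ‖Ring.inverse (1 - a ^ m)‖ ≤ (1 - c)⁻¹ :=
    (norm_inverse_one_sub_le h1 ham').trans (inv_anti₀ (by linarith) (by linarith))
  rw [inverse_one_sub_eq_geom_sum_mul ham']
  exact (norm_mul_le _ _).trans
    (mul_le_mul hsum hinv (norm_nonneg _) ((norm_nonneg _).trans hsum))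

end NeumannSeries

theorem Matrix.linfty_opNorm_one_le {n α : Type*} [Fintype n] [DecidableEq n] [NormedRing α]
    [NormOneClass α] :
    ‖(1 : Matrix n n α)‖ ≤ 1 := by
  rw [← Matrix.diagonal_one, Matrix.linfty_opNorm_diagonal]
  exact pi_norm_le_iff_of_nonneg zero_le_one |>.mpr fun _ => norm_one.le

theorem Matrix.linfty_opNorm_mono_s14 {m n α : Type*} [Fintype m] [Fintype n]
    [SeminormedAddCommGroup α]
    {A B : Matrix m n α} (h : ∀ i j, ‖A i j‖ ≤ ‖B i j‖) : ‖A‖ ≤ ‖B‖ := by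
  rw [Matrix.linfty_opNorm_def, Matrix.linfty_opNorm_def, NNReal.coe_le_coe]
  exact Finset.sup_mono_fun fun i _ => Finset.sum_le_sum fun j _ => h i j


theorem Filter.Eventually.exists_forall_le_abs {P : ℝ → Prop} (h : ∀ᶠ x in atBot ⊔ atTop, P x) :
    ∃ x₀, 0 ≤ x₀ ∧ ∀ x, x₀ ≤ |x| → P x := by
  rw [← comap_abs_atTop, eventually_comap, eventually_atTop] at h
  obtain ⟨b, hb⟩ := h
  exact ⟨max b 0, le_max_right b 0, fun x hx => hb |x| ((le_max_left b 0).trans hx) x rfl⟩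

theorem norm_integral_cexp_neg_mul_le (ν : Measure ℝ) (z : ℂ) :
    ‖∫ x, Complex.exp (-z * x) ∂ν‖ ≤ ‖∫ x, Complex.exp (-z.re * x) ∂ν‖ := by
  have hnorm : ∀ x : ℝ, ‖Complex.exp (-z * x)‖ = Real.exp (-z.re * x) := fun x => by
    simp [Complex.norm_exp, Complex.mul_re]
  have hre : ∫ x, Complex.exp (-z.re * x) ∂ν = ((∫ x, Real.exp (-z.re * x) ∂ν : ℝ) : ℂ) := by
    rw [← integral_complex_ofReal]
    push_cast
    rfl
  calc ‖∫ x, Complex.exp (-z * x) ∂ν‖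
      ≤ ∫ x, ‖Complex.exp (-z * x)‖ ∂ν := norm_integral_le_integral_norm _
    _ = ∫ x, Real.exp (-z.re * x) ∂ν := by simp only [hnorm]
    _ = ‖∫ x, Complex.exp (-z.re * x) ∂ν‖ := by
      rw [hre, Complex.norm_real,
        Real.norm_of_nonneg (integral_nonneg fun x => (Real.exp_pos _).le)]

theorem norm_lapT_le_norm_lapT_re {p : ℕ} (μ : Fin p → Fin p → Measure ℝ) (z : ℂ) :
    ‖lapT μ z‖ ≤ ‖lapT μ z.re‖ :=
  Matrix.linfty_opNorm_mono_s14 fun i j => norm_integral_cexp_neg_mul_le (μ i j) z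

theorem limsup_implies_resolvent_bound_general {p : ℕ} (μ : Fin p → Fin p → Measure ℝ)
    (ϑ : ℝ)
    (hC : ∃ m : ℕ, 0 < m ∧ ∃ c : ℝ, c < 1 ∧ ∀ᶠ η : ℝ in (atBot ⊔ atTop),
      ‖(lapT μ (ϑ + η * Complex.I)) ^ m‖ ≤ c) :
    ∃ η₀ : ℝ, 0 ≤ η₀ ∧ ∃ C : ℝ, ∀ η : ℝ, η₀ ≤ |η| →
      IsUnit (1 - lapT μ (ϑ + η * Complex.I)) ∧
      ‖(1 - lapT μ (ϑ + η * Complex.I))⁻¹‖ ≤ C := by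
  obtain ⟨m, -, c, hc, hev⟩ := hC
  obtain ⟨η₀, hη₀, hpow⟩ := hev.exists_forall_le_abs
  refine ⟨η₀, hη₀, (∑ k ∈ Finset.range m, ‖lapT μ ϑ‖ ^ k) * (1 - c)⁻¹, fun η hη => ?_⟩
  have hA : ‖lapT μ (ϑ + η * Complex.I)‖ ≤ ‖lapT μ ϑ‖ := by
    simpa using norm_lapT_le_norm_lapT_re μ (ϑ + η * Complex.I)
  rw [Matrix.nonsing_inv_eq_ringInverse]
  exact ⟨isUnit_one_sub_of_norm_pow_lt_one ((hpow η hη).trans_lt hc),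
    norm_inverse_one_sub_le_of_norm_pow_le Matrix.linfty_opNorm_one_le hA (hpow η hη) hc⟩

/-- **Lemma 2.9, (C) ⟹ (E).** Under (A1) and (A2), if
`limsup_{η→±∞} ‖Lμ(ϑ+iη)^m‖ < 1` for some `m ≥ 1`, then there is `η₀ ≥ 0` with
`sup_{|η|≥η₀} ‖(I_p − Lμ(ϑ+iη))⁻¹‖ < ∞`; in particular `I_p − Lμ(ϑ+iη)` is invertible
for `|η| ≥ η₀`. -/
theorem limsup_implies_resolvent_bound {p : ℕ} (μ : Fin p → Fin p → Measure ℝ)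
    (hloc : ∀ i j, IsLocallyFiniteMeasure (μ i j))
    (hsupp : ∀ i j, μ i j (Set.Iio 0) = 0)
    (ϑ : ℝ) (hA1 : (ϑ : ℂ) ∈ interior (LTdom μ))
    (hA2 : specRad p (atomMat μ) < 1)
    (hC : ∃ m : ℕ, 0 < m ∧ ∃ c : ℝ, c < 1 ∧ ∀ᶠ η : ℝ in (atBot ⊔ atTop),
      ‖(lapT μ (ϑ + η * Complex.I)) ^ m‖ ≤ c) :
    ∃ η₀ : ℝ, 0 ≤ η₀ ∧ ∃ C : ℝ, ∀ η : ℝ, η₀ ≤ |η| →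
      IsUnit (1 - lapT μ (ϑ + η * Complex.I)) ∧
      ‖(1 - lapT μ (ϑ + η * Complex.I))⁻¹‖ ≤ C :=
  limsup_implies_resolvent_bound_general μ ϑ hC
end
end

section
/- Let μ be a p×p matrix of locally finite measures on [0,∞) satisfying (A1) and (A2). If there exists m ∈ ℕ such that limsup_{η→±∞} sup_{θ ≥ ϑ} ‖Lμ(θ+iη)^m‖ < 1, then the set Λ_ϑ = {λ ∈ D(Lμ) : Re(λ) > ϑ, det(I_p − Lμ(λ)) = 0} is finite. -/
open MeasureTheory Filter Topology

noncomputable section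

attribute [local instance] Matrix.linftyOpNormedRing

/-! `det (1 - Lμ z)` is holomorphic on a half-plane `a < re z` with `a < ϑ`, and its zeros with
`re z > ϑ` lie in a compact subset of it: by (D), `Lμ z` has no eigenvalue `1` once `|im z|` is
large, and `Lμ z → μ(0)` as `re z → ∞`, where `det (1 - μ(0)) ≠ 0` by (A2). A holomorphic
function that does not vanish identically on a connected domain has only finitely many zeros in
a compact subset of it. -/

open Complex Set

section Laplace

variable {ν : Measure ℝ}

lemma ae_nonneg_of_measure_Iio_eq_zero_s15 (hν : ν (Iio 0) = 0) : ∀ᵐ x ∂ν, 0 ≤ x :=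
  measure_mono_null (fun x (hx : ¬ 0 ≤ x) => (not_le.mp hx : x < 0)) hν

lemma norm_cexp_neg_mul_ofReal (z : ℂ) (x : ℝ) : ‖cexp (-z * x)‖ = Real.exp (-z.re * x) := by
  simp [Complex.norm_exp]

lemma integrable_exp_neg_mul_of_le (hν : ν (Iio 0) = 0) {a b : ℝ}
    (ha : Integrable (fun x => Real.exp (-a * x)) ν) (hab : a ≤ b) :
    Integrable (fun x => Real.exp (-b * x)) ν := by
  refine ha.mono' (by fun_prop) ?_
  filter_upwards [ae_nonneg_of_measure_Iio_eq_zero_s15 hν] with x hx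
  rw [Real.norm_of_nonneg (Real.exp_pos _).le]
  exact Real.exp_le_exp.mpr (by nlinarith)

lemma integrable_cexp_neg_mul (hν : ν (Iio 0) = 0) {a : ℝ}
    (ha : Integrable (fun x => Real.exp (-a * x)) ν) {z : ℂ} (hz : a ≤ z.re) :
    Integrable (fun x : ℝ => cexp (-z * x)) ν :=
  (integrable_exp_neg_mul_of_le hν ha hz).mono' (by fun_prop)
    (.of_forall fun x => (norm_cexp_neg_mul_ofReal z x).le)

lemma mul_exp_neg_mul_le {a b ε x : ℝ} (hx : 0 ≤ x) (hε : 0 < ε) (hb : a + ε ≤ b) :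
    x * Real.exp (-b * x) ≤ ε⁻¹ * Real.exp (-a * x) := by
  have hx' : x ≤ ε⁻¹ * Real.exp (ε * x) :=
    (le_inv_mul_iff₀ hε).2 (by linarith [Real.add_one_le_exp (ε * x)])
  calc x * Real.exp (-b * x) ≤ ε⁻¹ * Real.exp (ε * x) * Real.exp (-b * x) := by gcongr
    _ = ε⁻¹ * Real.exp ((ε - b) * x) := by rw [mul_assoc, ← Real.exp_add]; ring_nf
    _ ≤ ε⁻¹ * Real.exp (-a * x) := by gcongr; nlinarith

lemma hasDerivAt_laplace (hν : ν (Iio 0) = 0) {a : ℝ}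
    (ha : Integrable (fun x => Real.exp (-a * x)) ν) {z₀ : ℂ} (hz₀ : a < z₀.re) :
    HasDerivAt (fun z : ℂ => ∫ x, cexp (-z * x) ∂ν)
      (∫ x, -(x : ℂ) * cexp (-z₀ * x) ∂ν) z₀ := by
  set ε := (z₀.re - a) / 2 with hε_def
  have hε : 0 < ε := by linarith
  refine (hasDerivAt_integral_of_dominated_loc_of_deriv_le
    (F := fun z (x : ℝ) => cexp (-z * x)) (F' := fun z (x : ℝ) => -(x : ℂ) * cexp (-z * x))
    (bound := fun x => ε⁻¹ * Real.exp (-a * x)) (Metric.ball_mem_nhds z₀ hε)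
    (.of_forall fun z => by fun_prop) (integrable_cexp_neg_mul hν ha hz₀.le) (by fun_prop) ?_
    (ha.const_mul _) ?_).2
  · filter_upwards [ae_nonneg_of_measure_Iio_eq_zero_s15 hν] with x hx z hz
    have hre : a + ε ≤ z.re := by
      have h := (abs_re_le_norm (z - z₀)).trans_lt (mem_ball_iff_norm.1 hz)
      rw [sub_re] at h
      linarith [neg_abs_le (z.re - z₀.re)]
    rw [norm_mul, norm_neg, norm_real, Real.norm_of_nonneg hx, norm_cexp_neg_mul_ofReal]
    exact mul_exp_neg_mul_le hx hε hre
  · refine .of_forall fun x z _ => ?_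
    simpa [mul_comm] using ((hasDerivAt_id z).neg.mul_const (x : ℂ)).cexp

lemma tendsto_laplace_comap_re_atTop (hν : ν (Iio 0) = 0) {a : ℝ}
    (ha : Integrable (fun x => Real.exp (-a * x)) ν) :
    Tendsto (fun z : ℂ => ∫ x, cexp (-z * x) ∂ν) (comap re atTop)
      (𝓝 ((ν {0}).toReal : ℂ)) := by
  -- on `[0, ∞)`, `e^{-zx}` tends to the indicator of `{0}` as `re z → ∞`
  have hlim :
      ∫ x, ({0} : Set ℝ).indicator (fun _ => (1 : ℂ)) x ∂ν = ((ν {0}).toReal : ℂ) := by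
    rw [integral_indicator_const _ (measurableSet_singleton 0)]
    simp [Measure.real]
  rw [← hlim]
  refine tendsto_integral_filter_of_dominated_convergence (fun x => Real.exp (-a * x))
    (.of_forall fun z => by fun_prop) ?_ ha ?_
  · filter_upwards [(eventually_ge_atTop a).comap re] with z hz
    filter_upwards [ae_nonneg_of_measure_Iio_eq_zero_s15 hν] with x hx
    rw [norm_cexp_neg_mul_ofReal]
    exact Real.exp_le_exp.mpr (by nlinarith)
  · filter_upwards [ae_nonneg_of_measure_Iio_eq_zero_s15 hν] with x hx
    rcases hx.eq_or_lt with rfl | hx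
    · simpa using tendsto_const_nhds
    · rw [indicator_of_notMem (by simpa using hx.ne'), tendsto_zero_iff_norm_tendsto_zero]
      simp_rw [norm_cexp_neg_mul_ofReal, neg_mul]
      exact Real.tendsto_exp_atBot.comp
        (tendsto_neg_atTop_atBot.comp ((tendsto_id.atTop_mul_const hx).comp tendsto_comap))

end Laplace

lemma AnalyticOnNhd.finite_zeros_of_isCompact_subset {𝕜 E : Type*} [NontriviallyNormedField 𝕜]
    [NormedAddCommGroup E] [NormedSpace 𝕜 E] {f : 𝕜 → E} {U K : Set 𝕜}
    (hf : AnalyticOnNhd 𝕜 f U) (hU : IsPreconnected U) (hK : IsCompact K) (hKU : K ⊆ U)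
    {z₀ : 𝕜} (hz₀ : z₀ ∈ U) (hfz₀ : f z₀ ≠ 0) : {z ∈ K | f z = 0}.Finite := by
  rcases hf.eqOn_zero_or_eventually_ne_zero_of_preconnected hU with h | h
  · exact absurd (h hz₀) hfz₀
  · exact (hK.finite_sdiff_of_mem_codiscreteWithin (codiscreteWithin_mono hKU h)).subset
      fun z hz => ⟨hz.1, fun hne => hne hz.2⟩

open Matrix in
lemma Matrix.det_one_sub_ne_zero_of_norm_pow_lt_one {n 𝕜 : Type*} [Fintype n] [DecidableEq n]
    [NormedField 𝕜] {A : Matrix n n 𝕜} {m : ℕ} (h : ‖A ^ m‖ < 1) :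
    (1 - A).det ≠ 0 := by
  intro hdet
  obtain ⟨v, hv0, hv⟩ := exists_mulVec_eq_zero_iff.2 hdet
  have hAv : A *ᵥ v = v := by
    rw [sub_mulVec, one_mulVec, sub_eq_zero] at hv
    exact hv.symm
  have hAmv : ∀ k : ℕ, A ^ k *ᵥ v = v := by
    intro k
    induction k with
    | zero => simp
    | succ k ih => rw [pow_succ, ← mulVec_mulVec, hAv, ih]
  have := linfty_opNorm_mulVec (A ^ m) v
  rw [hAmv] at this
  nlinarith [norm_pos_iff.2 hv0]

lemma det_one_sub_ne_zero_of_specRad_lt_one {p : ℕ} {A : Matrix (Fin p) (Fin p) ℂ}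
    (hA : specRad p A < 1) : (1 - A).det ≠ 0 := by
  intro h
  have h1 : (1 : ℂ) ∈ spectrum ℂ A := by
    rw [spectrum.mem_iff, map_one, Matrix.isUnit_iff_isUnit_det, h]
    exact not_isUnit_zero
  have := le_csSup ((Matrix.finite_spectrum A).image _).bddAbove ⟨1, h1, norm_one⟩
  exact absurd hA (not_lt.2 this)

section LaplaceMatrix

variable {p : ℕ} {μ : Fin p → Fin p → Measure ℝ} {a : ℝ}

lemma differentiableOn_det_one_sub_lapT (hμ : ∀ i j, μ i j (Iio 0) = 0)
    (ha : ∀ i j, Integrable (fun x => Real.exp (-a * x)) (μ i j)) :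
    DifferentiableOn ℂ (fun z => (1 - lapT μ z).det) {z : ℂ | a < z.re} := by
  have hentry : ∀ i j, DifferentiableOn ℂ (fun z => lapT μ z i j) {z : ℂ | a < z.re} :=
    fun i j z hz =>
      (hasDerivAt_laplace (hμ i j) (ha i j) hz).differentiableAt.differentiableWithinAt
  simp only [Matrix.det_apply, Units.smul_def, zsmul_eq_mul]
  exact .fun_sum fun σ _ => (DifferentiableOn.fun_finsetProd fun i _ =>
    (differentiableOn_const _).sub (hentry (σ i) i)).const_mul _

lemma tendsto_lapT_comap_re_atTop (hμ : ∀ i j, μ i j (Iio 0) = 0)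
    (ha : ∀ i j, Integrable (fun x => Real.exp (-a * x)) (μ i j)) :
    Tendsto (lapT μ) (comap re atTop) (𝓝 (atomMat μ)) :=
  tendsto_pi_nhds.2 fun i => tendsto_pi_nhds.2 fun j =>
    tendsto_laplace_comap_re_atTop (hμ i j) (ha i j)

end LaplaceMatrix

theorem limsup_implies_lambda_finite_general {p : ℕ} (μ : Fin p → Fin p → Measure ℝ)
    (hsupp : ∀ i j, μ i j (Set.Iio 0) = 0)
    (ϑ : ℝ) (hA1 : (ϑ : ℂ) ∈ interior (LTdom μ))
    (hA2 : specRad p (atomMat μ) < 1)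
    (hD : ∃ m : ℕ, 0 < m ∧ ∃ c : ℝ, c < 1 ∧ ∀ᶠ η : ℝ in (atBot ⊔ atTop),
      ∀ θ : ℝ, ϑ ≤ θ → ‖(lapT μ (θ + η * Complex.I)) ^ m‖ ≤ c) :
    {z ∈ LambdaSet μ | ϑ < z.re}.Finite := by
  obtain ⟨a, ha, haϑ⟩ :
      ∃ a : ℝ, (∀ i j, Integrable (fun x => Real.exp (-a * x)) (μ i j)) ∧ a < ϑ := by
    have h := (continuous_ofReal.tendsto ϑ).eventually (mem_interior_iff_mem_nhds.1 hA1)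
    obtain ⟨a, ha, haϑ⟩ := ((h.filter_mono nhdsWithin_le_nhds).and
      (self_mem_nhdsWithin : ∀ᶠ x in 𝓝[<] ϑ, x < ϑ)).exists
    exact ⟨a, by simpa [LTdom] using ha, haϑ⟩
  set F := fun z => (1 - lapT μ z).det
  have hF : AnalyticOnNhd ℂ F {z | a < z.re} :=
    (differentiableOn_det_one_sub_lapT hsupp ha).analyticOnNhd
      (isOpen_lt continuous_const continuous_re)
  obtain ⟨R, hR⟩ : ∃ R, ∀ z : ℂ, R ≤ z.re → F z ≠ 0 := by
    have h := (((continuous_const.sub continuous_id).matrix_det.tendsto _).comp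
      (tendsto_lapT_comap_re_atTop hsupp ha)).eventually_ne
      (det_one_sub_ne_zero_of_specRad_lt_one hA2)
    obtain ⟨R, hR⟩ := eventually_atTop.1 (eventually_comap.1 h)
    exact ⟨R, fun z hz => hR z.re hz z rfl⟩
  obtain ⟨t, ht, hIm⟩ :
      ∃ t, IsCompact t ∧ ∀ z : ℂ, ϑ ≤ z.re → z.im ∉ t → F z ≠ 0 := by
    obtain ⟨m, -, c, hc, hev⟩ := hD
    rw [← cocompact_eq_atBot_atTop] at hev
    obtain ⟨t, ht, hsub⟩ := mem_cocompact.1 hev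
    refine ⟨t, ht, fun z hz hzt => Matrix.det_one_sub_ne_zero_of_norm_pow_lt_one (m := m) ?_⟩
    have := hsub hzt z.re hz
    rw [re_add_im] at this
    linarith
  refine (hF.finite_zeros_of_isCompact_subset (convex_halfSpace_re_gt a).isPreconnected
    ((isCompact_Icc (a := ϑ) (b := R)).reProdIm ht) (fun z hz => haϑ.trans_le hz.1.1)
    (z₀ := (max R ϑ : ℝ)) (by simpa using Or.inr haϑ) (hR _ (by simp))).subset ?_
  rintro z ⟨⟨-, hz⟩, hzϑ⟩
  refine ⟨⟨⟨hzϑ.le, not_lt.1 fun h => hR z h.le hz⟩, ?_⟩, hz⟩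
  by_contra h
  exact hIm z hzϑ.le h hz

/-- **Lemma 2.9, (D) ⟹ finiteness of `Λ_ϑ`.** Under (A1) and (A2), if
`limsup_{η→±∞} sup_{θ≥ϑ} ‖Lμ(θ+iη)^m‖ < 1` for some `m ≥ 1`, then
`Λ_ϑ = {λ ∈ D(Lμ) : Re(λ) > ϑ, det(I_p − Lμ(λ)) = 0}` is finite. -/
theorem limsup_implies_lambda_finite {p : ℕ} (μ : Fin p → Fin p → Measure ℝ)
    (hloc : ∀ i j, IsLocallyFiniteMeasure (μ i j))
    (hsupp : ∀ i j, μ i j (Set.Iio 0) = 0)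
    (ϑ : ℝ) (hA1 : (ϑ : ℂ) ∈ interior (LTdom μ))
    (hA2 : specRad p (atomMat μ) < 1)
    (hD : ∃ m : ℕ, 0 < m ∧ ∃ c : ℝ, c < 1 ∧ ∀ᶠ η : ℝ in (atBot ⊔ atTop),
      ∀ θ : ℝ, ϑ ≤ θ → ‖(lapT μ (θ + η * Complex.I)) ^ m‖ ≤ c) :
    {z ∈ LambdaSet μ | ϑ < z.re}.Finite :=
  limsup_implies_lambda_finite_general μ hsupp ϑ hA1 hA2 hD
end
end
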